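/- arXiv:2308.02946 — 3 statements merged into one kernel-verified Lean document; each statement's English description precedes it below -/
import Mathlib

section
/- Let n ∈ ℕ and let A = {a_1,…,a_n}, B = {b_1,…,b_n} be the two sides of the complete bipartite graph K_{A,B}. For k = 1, 2, let π_k be a permutation of [n] and let T_k be a spanning tree of K_{A,B} containing the perfect matching M_{π_k} = {(a_i, b_{π_k(i)}) : i ∈ [n]}. Then φ(T_1) = φ(T_2) if and only if T_2 = ρT_1, where ρ = π_2 ∘ π_1^{−1}. -/
open MeasureTheory Finset

/-- The product measure on cost matrices: each entry independent uniform on `[0,1]`. -/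
noncomputable def costMeasure (n : ℕ) : Measure (Fin n × Fin n → ℝ) :=
  Measure.pi fun _ => volume.restrict (Set.Icc 0 1)

/-- The cost of the permutation `π`: `∑ i, C (i, π i)`. -/
def permCost {n : ℕ} (C : Fin n × Fin n → ℝ) (π : Equiv.Perm (Fin n)) : ℝ :=
  ∑ i, C (i, π i)

/-- A permutation avoiding the diagonal. -/
def IsDerangement {n : ℕ} (π : Equiv.Perm (Fin n)) : Prop := ∀ i, π i ≠ i

/-- A cyclic permutation: a single cycle through all `n` points. -/
def IsCyclicPerm {n : ℕ} (π : Equiv.Perm (Fin n)) : Prop := π.IsCycle ∧ ∀ i, π i ≠ i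

/-- Optimal value of the assignment problem (diagonal forbidden). -/
noncomputable def ZAP (n : ℕ) (C : Fin n × Fin n → ℝ) : ℝ :=
  sInf {x | ∃ π : Equiv.Perm (Fin n), IsDerangement π ∧ x = permCost C π}

/-- Optimal value of the asymmetric TSP. -/
noncomputable def ZATSP (n : ℕ) (C : Fin n × Fin n → ℝ) : ℝ :=
  sInf {x | ∃ π : Equiv.Perm (Fin n), IsCyclicPerm π ∧ x = permCost C π}

/-- The arcs in `F1` have in- and out-degree at most one and contain
no directed cycle of length `< n`. -/
def ValidArcs {n : ℕ} (F1 : Set (Fin n × Fin n)) : Prop :=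
  (∀ e ∈ F1, ∀ e' ∈ F1, (e : Fin n × Fin n).1 = (e' : Fin n × Fin n).1 → e = e') ∧
  (∀ e ∈ F1, ∀ e' ∈ F1, (e : Fin n × Fin n).2 = (e' : Fin n × Fin n).2 → e = e') ∧
  (∀ k : ℕ, 0 < k → k < n → ∀ f : ZMod k → Fin n,
    Function.Injective f → ¬ (∀ t, (f t, f (t + 1)) ∈ F1))

/-- `(F0, F1)` is a constraint pair. -/
def IsConstraint {n : ℕ} (F0 F1 : Finset (Fin n × Fin n)) : Prop :=
  Disjoint F0 F1 ∧ (∀ e ∈ F0 ∪ F1, (e : Fin n × Fin n).1 ≠ (e : Fin n × Fin n).2) ∧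
    ValidArcs (F1 : Set (Fin n × Fin n))

/-- The inadmissible arcs: off-diagonal arcs not in `F1` whose addition to `F1`
violates the degree or short-cycle conditions. -/
def Fhat0 {n : ℕ} (F1 : Finset (Fin n × Fin n)) : Set (Fin n × Fin n) :=
  {e | e.1 ≠ e.2 ∧ e ∉ F1 ∧ ¬ ValidArcs (insert e (F1 : Set (Fin n × Fin n)))}

/-- An arc not in `F0 ∪ F1 ∪ F̂0 ∪ D`. -/
def Admissible {n : ℕ} (F0 F1 : Finset (Fin n × Fin n)) (e : Fin n × Fin n) : Prop :=
  e.1 ≠ e.2 ∧ e ∉ F0 ∧ e ∉ F1 ∧ e ∉ Fhat0 F1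

/-- `π` is feasible for `AP(F)`. -/
def FeasibleAP {n : ℕ} (F0 F1 : Finset (Fin n × Fin n)) (π : Equiv.Perm (Fin n)) : Prop :=
  (∀ i, π i ≠ i) ∧ (∀ e ∈ F1, π (e : Fin n × Fin n).1 = (e : Fin n × Fin n).2) ∧
  (∀ i, (i, π i) ∉ F0 ∧ (i, π i) ∉ Fhat0 F1)

/-- Optimal value of the restricted assignment problem `AP(F)`. -/
noncomputable def ZAPF {n : ℕ} (C : Fin n × Fin n → ℝ) (F0 F1 : Finset (Fin n × Fin n)) : ℝ :=
  sInf {x | ∃ π : Equiv.Perm (Fin n), FeasibleAP F0 F1 π ∧ x = permCost C π}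

/-- Condition (⋆): `|F1| ≤ n^{3ε/8}` and `|F0| ≤ n^{3ε/4}`. -/
def StarCond {n : ℕ} (ε : ℝ) (F0 F1 : Finset (Fin n × Fin n)) : Prop :=
  (F1.card : ℝ) ≤ (n : ℝ) ^ (3 * ε / 8) ∧ (F0.card : ℝ) ≤ (n : ℝ) ^ (3 * ε / 4)

/-- `(a_i, b_j)` is an edge of `K_{A,B:F}`. -/
def EdgeKF {n : ℕ} (F0 F1 : Finset (Fin n × Fin n)) (i j : Fin n) : Prop :=
  i ≠ j ∧ (i, j) ∉ F0 ∧ (i, j) ∉ Fhat0 F1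

/-- `b_j ∈ N_ζ(a_i)`: `(a_i,b_j)` is among the `ζ` cheapest edges of `K_{A,B:F}` at `a_i`. -/
def Nout {n : ℕ} (C : Fin n × Fin n → ℝ) (F0 F1 : Finset (Fin n × Fin n)) (ζ : ℕ)
    (i : Fin n) : Set (Fin n) :=
  {j | EdgeKF F0 F1 i j ∧ {j' | EdgeKF F0 F1 i j' ∧ C (i, j') < C (i, j)}.ncard < ζ}

/-- `a_i ∈ N_ζ(b_j)`: `(a_i,b_j)` is among the `ζ` cheapest edges of `K_{A,B:F}` at `b_j`. -/
def Nin {n : ℕ} (C : Fin n × Fin n → ℝ) (F0 F1 : Finset (Fin n × Fin n)) (ζ : ℕ)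
    (j : Fin n) : Set (Fin n) :=
  {i | EdgeKF F0 F1 i j ∧ {i' | EdgeKF F0 F1 i' j ∧ C (i', j) < C (i, j)}.ncard < ζ}

/-- Forward arcs `(a_i, b_j)` of the digraph `D⃗_F(C,π)`. -/
def ForwardArc {n : ℕ} (C : Fin n × Fin n → ℝ) (F0 F1 : Finset (Fin n × Fin n)) (ζ : ℕ)
    (i j : Fin n) : Prop :=
  (i, j) ∉ F0 ∧ (i, j) ∉ F1 ∧ (i, j) ∉ Fhat0 F1 ∧ i ≠ j ∧
    (j ∈ Nout C F0 F1 ζ i ∨ i ∈ Nin C F0 F1 ζ j)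

/-- The bipartite graph on `A ⊕ B` whose edges `(a_i, b_j)` are given by a set of pairs. -/
def bipGraph {n : ℕ} (T : Finset (Fin n × Fin n)) : SimpleGraph (Fin n ⊕ Fin n) :=
  SimpleGraph.fromRel fun u v =>
    ∃ p ∈ T, u = Sum.inl (p : Fin n × Fin n).1 ∧ v = Sum.inr (p : Fin n × Fin n).2

/-- Arcs of the contraction `φ(T)`: an arc `(i₁, i₂)` for every non-matching
edge `(a_{i₁}, b_{π i₂})` of `T`. -/
def contractionArcs {n : ℕ} (π : Equiv.Perm (Fin n)) (T : Finset (Fin n × Fin n)) :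
    Set (Fin n × Fin n) :=
  {q | (q.1, π q.2) ∈ T ∧ q.1 ≠ q.2}

/-- The contraction `φ(T)` as an (undirected) graph on `[n]`: an edge `{i₁, i₂}` for
every non-matching edge `(a_{i₁}, b_{π i₂})` of `T`. -/
def contractGraph {n : ℕ} (π : Equiv.Perm (Fin n)) (T : Finset (Fin n × Fin n)) :
    SimpleGraph (Fin n) :=
  SimpleGraph.fromRel fun i₁ i₂ => (i₁, π i₂) ∈ T

/-- for spanning trees `T₁, T₂` of `K_{A,B}` containing the perfect matchings
of `π₁, π₂` respectively, `φ(T₁) = φ(T₂)` iff `T₂ = ρ T₁` where `ρ = π₂ ∘ π₁⁻¹`. -/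
theorem statement_10 (n : ℕ) (π₁ π₂ : Equiv.Perm (Fin n))
    (T₁ T₂ : Finset (Fin n × Fin n))
    (ht₁ : (bipGraph T₁).IsTree) (hm₁ : ∀ i, (i, π₁ i) ∈ T₁)
    (ht₂ : (bipGraph T₂).IsTree) (hm₂ : ∀ i, (i, π₂ i) ∈ T₂) :
    contractionArcs π₁ T₁ = contractionArcs π₂ T₂ ↔
      T₂ = T₁.image fun p => (p.1, π₂ (π₁⁻¹ p.2)) := by
  constructor
  · intro h
    ext ⟨i, j⟩
    simp only [Finset.mem_image, Prod.mk.injEq, Prod.exists]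
    constructor
    · intro hij
      by_cases hj : j = π₂ i
      · exact ⟨i, π₁ i, hm₁ i, rfl, by simp [hj]⟩
      · have harc : ((i, π₂⁻¹ j) : Fin n × Fin n) ∈ contractionArcs π₂ T₂ := by
          refine ⟨by simpa using hij, fun he => hj ?_⟩
          simp only at he
          rw [he]; simp
        rw [← h] at harc
        exact ⟨i, π₁ (π₂⁻¹ j), harc.1, rfl, by simp⟩
    · rintro ⟨a, b, hab, rfl, rfl⟩
      by_cases hb : b = π₁ a
      · subst hb; simpa using hm₂ a
      · have harc : ((a, π₁⁻¹ b) : Fin n × Fin n) ∈ contractionArcs π₁ T₁ := by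
          refine ⟨by simpa using hab, fun he => hb ?_⟩
          simp only at he
          rw [he]; simp
        rw [h] at harc
        exact harc.1
  · intro h
    rw [h]
    ext ⟨i, j⟩
    simp only [contractionArcs, Set.mem_setOf_eq, Finset.mem_image, Prod.mk.injEq,
      Prod.exists]
    constructor
    · rintro ⟨h1, hne⟩
      exact ⟨⟨i, π₁ j, h1, rfl, by simp⟩, hne⟩
    · rintro ⟨⟨a, b, hab, rfl, hb⟩, hne⟩
      have : b = π₁ j := by
        have := π₂.injective hb
        rw [← this]; simp
      rw [← this]; exact ⟨hab, hne⟩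
end

section
/- Let n ≥ 2 and let T be a tree on vertex set [n]. The number of spanning trees T* of the complete bipartite graph K_{A,B} (with A = {a_1,…,a_n}, B = {b_1,…,b_n}) that contain the identity perfect matching {(a_i, b_i) : i ∈ [n]} and contract to T (upon contracting each matching edge (a_i, b_i) to the single vertex i) is exactly 2^{n−1}. Equivalently, such T* are exactly the graphs consisting of the identity matching together with, for each edge {i, j} of T, exactly one of the two edges (a_i, b_j) or (a_j, b_i), and every such choice yields a spanning tree of K_{A,B}. -/
open MeasureTheory Finset

namespace St11

open SimpleGraph

variable {n : ℕ} {S : Finset (Fin n × Fin n)}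

lemma bip_adj (S : Finset (Fin n × Fin n)) (i j : Fin n) :
    (bipGraph S).Adj (Sum.inl i) (Sum.inr j) ↔ (i, j) ∈ S := by
  constructor
  · rintro ⟨-, ⟨p, hp, h1, h2⟩ | ⟨p, hp, h1, h2⟩⟩
    · cases h1; cases h2; simpa using hp
    · exact absurd h1 (by simp)
  · intro h
    exact ⟨by simp, Or.inl ⟨(i, j), h, rfl, rfl⟩⟩

lemma bip_adj_cases (h : (bipGraph S).Adj u v) :
    (∃ i j, (i, j) ∈ S ∧ u = Sum.inl i ∧ v = Sum.inr j) ∨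
    (∃ i j, (i, j) ∈ S ∧ u = Sum.inr j ∧ v = Sum.inl i) := by
  obtain ⟨-, ⟨p, hp, h1, h2⟩ | ⟨p, hp, h1, h2⟩⟩ := h
  · exact .inl ⟨p.1, p.2, hp, h1, h2⟩
  · exact .inr ⟨p.1, p.2, hp, h2, h1⟩

def projFun (S : Finset (Fin n × Fin n)) :
    (Fin n ⊕ Fin n) → (Fin n ⊕ Fin n) → Option (Sym2 (Fin n))
  | .inl i, .inr j => if i ≠ j ∧ (i, j) ∈ S then some s(i, j) else none
  | .inr j, .inl i => if i ≠ j ∧ (i, j) ∈ S then some s(i, j) else none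
  | _, _ => none

def projEdge (S : Finset (Fin n × Fin n)) : Sym2 (Fin n ⊕ Fin n) → Option (Sym2 (Fin n)) :=
  Sym2.lift ⟨projFun S, by rintro (i | i) (j | j) <;> simp [projFun]⟩

@[simp] lemma projEdge_mk (u v : Fin n ⊕ Fin n) : projEdge S s(u, v) = projFun S u v := by
  simp [projEdge]

lemma projEdge_eq_some {e : Sym2 (Fin n ⊕ Fin n)} {x : Sym2 (Fin n)}
    (h : projEdge S e = some x) :
    ∃ a b, a ≠ b ∧ (a, b) ∈ S ∧ e = s(Sum.inl a, Sum.inr b) ∧ x = s(a, b) := by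
  induction e with
  | _ u v =>
    rcases u with i | i <;> rcases v with j | j <;>
      simp only [projEdge_mk, projFun] at h
    · exact absurd h (by simp)
    · rcases Decidable.em (i ≠ j ∧ (i, j) ∈ S) with hc | hc
      · rw [if_pos hc] at h
        exact ⟨i, j, hc.1, hc.2, rfl, (Option.some_inj.mp h).symm⟩
      · rw [if_neg hc] at h; exact absurd h (by simp)
    · rcases Decidable.em (j ≠ i ∧ (j, i) ∈ S) with hc | hc
      · rw [if_pos hc] at h
        exact ⟨j, i, hc.1, hc.2, Sym2.eq_swap, (Option.some_inj.mp h).symm⟩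
      · rw [if_neg hc] at h; exact absurd h (by simp)
    · exact absurd h (by simp)


variable {T : SimpleGraph (Fin n)}

abbrev fp : Fin n ⊕ Fin n → Fin n := Sum.elim id id

lemma proj_walk (h1 : ∀ p ∈ S, (p : Fin n × Fin n).1 = p.2 ∨ T.Adj p.1 p.2) :
    ∀ {u v : Fin n ⊕ Fin n} (p : (bipGraph S).Walk u v),
      ∃ q : T.Walk (fp u) (fp v), q.edges = p.edges.filterMap (projEdge S) := by
  intro u v p
  induction p with
  | nil => exact ⟨.nil, by simp⟩
  | @cons u w v h p ih =>
    obtain ⟨q, hq⟩ := ih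
    rcases bip_adj_cases h with ⟨i, j, hij, hu, hw⟩ | ⟨i, j, hij, hu, hw⟩
    · subst hu; subst hw
      by_cases hd : i = j
      · subst hd
        refine ⟨q.copy (by simp) rfl, ?_⟩
        exact (Walk.edges_copy q _ _).trans (by rw [hq]; simp [projFun])
      · refine ⟨Walk.cons (by simpa using (h1 _ hij).resolve_left hd) q, ?_⟩
        rw [Walk.edges_cons, hq]; simp [projFun, hd, hij]
    · subst hu; subst hw
      by_cases hd : i = j
      · subst hd
        refine ⟨q.copy (by simp) rfl, ?_⟩
        exact (Walk.edges_copy q _ _).trans (by rw [hq]; simp [projFun])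
      · refine ⟨Walk.cons (by simpa using ((h1 _ hij).resolve_left hd).symm) q, ?_⟩
        simp only [Walk.edges_cons, hq, List.filterMap_cons, projEdge_mk, projFun]
        rw [if_pos ⟨hd, hij⟩]
        simp [Sym2.eq_swap]

lemma projEdge_injOn (h1 : ∀ p ∈ S, (p : Fin n × Fin n).1 = p.2 ∨ T.Adj p.1 p.2)
    (h3 : ∀ i j : Fin n, T.Adj i j → ((i, j) ∈ S ↔ (j, i) ∉ S))
    {e e' : Sym2 (Fin n ⊕ Fin n)} {x : Sym2 (Fin n)}
    (he : projEdge S e = some x) (he' : projEdge S e' = some x) : e = e' := by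
  obtain ⟨a, b, hab, habS, rfl, rfl⟩ := projEdge_eq_some he
  obtain ⟨a', b', hab', habS', rfl, hx⟩ := projEdge_eq_some he'
  rw [Sym2.eq_iff] at hx
  rcases hx with ⟨rfl, rfl⟩ | ⟨rfl, rfl⟩
  · rfl
  · have hadj : T.Adj b a := by
      rcases h1 _ habS' with h | h
      · exact absurd h hab'
      · exact h
    exact absurd habS ((h3 b a hadj).mp habS')

lemma bip_acyclic (hTa : T.IsAcyclic)
    (h1 : ∀ p ∈ S, (p : Fin n × Fin n).1 = p.2 ∨ T.Adj p.1 p.2)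
    (h3 : ∀ i j : Fin n, T.Adj i j → ((i, j) ∈ S ↔ (j, i) ∉ S)) :
    (bipGraph S).IsAcyclic := by
  intro v c hc
  obtain ⟨q, hq⟩ := proj_walk (T := T) h1 c
  have hnd : q.edges.Nodup := by
    rw [hq]
    refine List.Nodup.filterMap ?_ hc.isCircuit.isTrail.edges_nodup
    intro a a' b hb hb'
    exact projEdge_injOn h1 h3 (Option.mem_def.mp hb) (Option.mem_def.mp hb')
  have h3len := hc.three_le_length
  have hex : ∃ e ∈ c.edges, ∃ x, projEdge S e = some x := by
    by_contra hno
    push_neg at hno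
    have hnone : ∀ e ∈ c.edges, projEdge S e = none := by
      intro e he
      rcases hcase : projEdge S e with _ | x
      · rfl
      · exact absurd hcase (hno e he x)
    cases c with
    | nil => simp at h3len
    | @cons _ w₁ _ h₁ c₁ =>
      cases c₁ with
      | nil => simp at h3len
      | @cons _ w₂ _ h₂ p' =>
        have he₁ : projEdge S s(v, w₁) = none := hnone _ (by simp)
        have he₂ : projEdge S s(w₁, w₂) = none := hnone _ (by simp)
        have hw₂ : w₂ = v := by
          rcases bip_adj_cases h₁ with ⟨i, j, hij, rfl, rfl⟩ | ⟨i, j, hij, rfl, rfl⟩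
          · have hij' : i = j := by
              by_contra hne
              rw [projEdge_mk] at he₁
              simp [projFun, hne, hij] at he₁
            subst hij'
            rcases bip_adj_cases h₂ with ⟨a, b, hab, hw, rfl⟩ | ⟨a, b, hab, hw, rfl⟩
            · exact absurd hw (by simp)
            · have hbi : i = b := by simpa using hw
              subst hbi
              have hai : a = i := by
                by_contra hne
                rw [projEdge_mk] at he₂
                simp [projFun, hne, hab] at he₂
              exact congrArg _ hai
          · have hij' : i = j := by
              by_contra hne
              rw [Sym2.eq_swap, projEdge_mk] at he₁
              simp [projFun, hne, hij] at he₁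
            subst hij'
            rcases bip_adj_cases h₂ with ⟨a, b, hab, hw, rfl⟩ | ⟨a, b, hab, hw, rfl⟩
            · have hia : i = a := by simpa using hw
              subst hia
              have hbi : b = i := by
                by_contra hne
                rw [projEdge_mk] at he₂
                simp [projFun, hab, Ne.symm hne] at he₂
              exact congrArg _ hbi
            · exact absurd hw (by simp)
        subst hw₂
        cases p' with
        | nil => simp at h3len
        | @cons _ w₃ _ h₃ p'' =>
          have hnd2 := hc.2
          simp only [Walk.support_cons, List.tail_cons, List.nodup_cons] at hnd2
          exact hnd2.2.1 (by simp [Walk.end_mem_support p''])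
  obtain ⟨e, he, x, hx⟩ := hex
  have hxq : x ∈ q.edges := by
    rw [hq]; exact List.mem_filterMap.mpr ⟨e, he, hx⟩
  cases q with
  | nil => simp at hxq
  | @cons _ y _ hadj q' =>
    have hb := (isAcyclic_iff_forall_adj_isBridge.mp hTa) hadj
    rw [isBridge_iff_adj_and_forall_walk_mem_edges] at hb
    have hmem := hb q'.reverse
    rw [Walk.edges_reverse, List.mem_reverse] at hmem
    simp only [Walk.edges_cons, List.nodup_cons] at hnd
    exact hnd.1 hmem

lemma bip_connected (hn : 2 ≤ n) (hTc : T.Connected)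
    (h2 : ∀ i : Fin n, (i, i) ∈ S)
    (h3 : ∀ i j : Fin n, T.Adj i j → ((i, j) ∈ S ↔ (j, i) ∉ S)) :
    (bipGraph S).Connected := by
  have hm : ∀ i : Fin n, (bipGraph S).Adj (Sum.inl i) (Sum.inr i) :=
    fun i => (bip_adj S i i).mpr (h2 i)
  have hstep : ∀ i j : Fin n, T.Adj i j →
      (bipGraph S).Reachable (Sum.inl i) (Sum.inl j) := by
    intro i j hadj
    by_cases hij : (i, j) ∈ S
    · exact (((bip_adj S i j).mpr hij).reachable).trans (hm j).symm.reachable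
    · have hji : (j, i) ∈ S := by
        by_contra h
        exact hij ((h3 i j hadj).mpr h)
      exact ((hm i).reachable).trans ((bip_adj S j i).mpr hji).symm.reachable
  have hll : ∀ i j : Fin n, (bipGraph S).Reachable (Sum.inl i) (Sum.inl j) := by
    intro i j
    obtain ⟨w⟩ := hTc.preconnected i j
    induction w with
    | nil => exact Reachable.refl _
    | cons h p ih => exact (hstep _ _ h).trans ih
  have hne : Nonempty (Fin n ⊕ Fin n) := ⟨Sum.inl ⟨0, by omega⟩⟩
  refine ⟨fun u v => ?_⟩
  rcases u with i | i <;> rcases v with j | j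
  · exact hll i j
  · exact (hll i j).trans (hm j).reachable
  · exact ((hm i).symm.reachable).trans (hll i j)
  · exact (((hm i).symm.reachable).trans (hll i j)).trans (hm j).reachable

lemma no_both (hac : (bipGraph S).IsAcyclic) (h2 : ∀ i : Fin n, (i, i) ∈ S)
    {i j : Fin n} (hne : i ≠ j) (hij : (i, j) ∈ S) (hji : (j, i) ∈ S) : False := by
  have a1 : (bipGraph S).Adj (Sum.inl i) (Sum.inr j) := (bip_adj S i j).mpr hij
  have a2 : (bipGraph S).Adj (Sum.inr j) (Sum.inl j) := ((bip_adj S j j).mpr (h2 j)).symm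
  have a3 : (bipGraph S).Adj (Sum.inl j) (Sum.inr i) := (bip_adj S j i).mpr hji
  have a4 : (bipGraph S).Adj (Sum.inr i) (Sum.inl i) := ((bip_adj S i i).mpr (h2 i)).symm
  refine hac (Walk.cons a1 (Walk.cons a2 (Walk.cons a3 (Walk.cons a4 Walk.nil)))) ?_
  rw [Walk.isCycle_def, Walk.isTrail_def]
  refine ⟨?_, by simp, ?_⟩ <;> simp [hne, Ne.symm hne, Sym2.eq_iff]

lemma contract_adj (S : Finset (Fin n × Fin n)) (i j : Fin n) :
    (contractGraph 1 S).Adj i j ↔ i ≠ j ∧ ((i, j) ∈ S ∨ (j, i) ∈ S) := by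
  simp [contractGraph, SimpleGraph.fromRel_adj]

end St11

/-- the spanning trees of `K_{A,B}` containing the identity matching and
contracting to a given tree `T` on `[n]` are exactly the graphs consisting of the identity
matching together with, for each edge `{i,j}` of `T`, exactly one of `(a_i, b_j)` and
`(a_j, b_i)`; and there are exactly `2^{n−1}` of them. -/
theorem statement_11 (n : ℕ) (hn : 2 ≤ n) (T : SimpleGraph (Fin n)) (hT : T.IsTree) :
    {S : Finset (Fin n × Fin n) | (bipGraph S).IsTree ∧ (∀ i, (i, i) ∈ S) ∧
        contractGraph 1 S = T}.ncard = 2 ^ (n - 1) ∧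
      {S : Finset (Fin n × Fin n) | (bipGraph S).IsTree ∧ (∀ i, (i, i) ∈ S) ∧
          contractGraph 1 S = T} =
        {S : Finset (Fin n × Fin n) |
          (∀ p ∈ S, (p : Fin n × Fin n).1 = p.2 ∨ T.Adj p.1 p.2) ∧
          (∀ i, (i, i) ∈ S) ∧
          ∀ i j : Fin n, T.Adj i j → ((i, j) ∈ S ↔ (j, i) ∉ S)} := by
  classical
  have key : {S : Finset (Fin n × Fin n) | (bipGraph S).IsTree ∧ (∀ i, (i, i) ∈ S) ∧
        contractGraph 1 S = T} =
      {S : Finset (Fin n × Fin n) |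
        (∀ p ∈ S, (p : Fin n × Fin n).1 = p.2 ∨ T.Adj p.1 p.2) ∧
        (∀ i, (i, i) ∈ S) ∧
        ∀ i j : Fin n, T.Adj i j → ((i, j) ∈ S ↔ (j, i) ∉ S)} := by
    ext S
    simp only [Set.mem_setOf_eq]
    constructor
    · rintro ⟨htree, hdiag, hcontract⟩
      have hc : ∀ i j : Fin n, T.Adj i j ↔ (i ≠ j ∧ ((i, j) ∈ S ∨ (j, i) ∈ S)) := by
        intro i j
        rw [← hcontract, St11.contract_adj]
      refine ⟨?_, hdiag, ?_⟩
      · intro p hp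
        by_cases hd : p.1 = p.2
        · exact .inl hd
        · exact .inr ((hc p.1 p.2).mpr ⟨hd, .inl (show (p.1, p.2) ∈ S from hp)⟩)
      · intro i j hadjT
        have hne := hadjT.ne
        constructor
        · intro hij hji
          exact St11.no_both htree.2 hdiag hne hij hji
        · intro hji
          rcases ((hc i j).mp hadjT).2 with h | h
          · exact h
          · exact absurd h hji
    · rintro ⟨h1, h2, h3⟩
      refine ⟨⟨St11.bip_connected hn hT.1 h2 h3, St11.bip_acyclic hT.2 h1 h3⟩, h2, ?_⟩
      ext i j
      rw [St11.contract_adj]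
      constructor
      · rintro ⟨hne, h | h⟩
        · exact (h1 _ h).resolve_left hne
        · exact ((h1 _ h).resolve_left (Ne.symm hne)).symm
      · intro hadj
        refine ⟨hadj.ne, ?_⟩
        by_cases hij : (i, j) ∈ S
        · exact .inl hij
        · by_contra hcon
          push_neg at hcon
          exact hij ((h3 i j hadj).mpr hcon.2)
  refine ⟨?_, key⟩
  rw [key]
  set Dlt : Finset (Fin n × Fin n) :=
    Finset.univ.filter (fun p : Fin n × Fin n => T.Adj p.1 p.2 ∧ p.1 < p.2) with hDlt
  have hDlt_mem : ∀ p : Fin n × Fin n, p ∈ Dlt ↔ T.Adj p.1 p.2 ∧ p.1 < p.2 := by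
    intro p; simp [hDlt]
  set diagF : Finset (Fin n × Fin n) := Finset.univ.image (fun i => (i, i)) with hdiagF
  have hdiag_mem : ∀ p : Fin n × Fin n, p ∈ diagF ↔ p.1 = p.2 := by
    intro p
    simp only [hdiagF, Finset.mem_image, Finset.mem_univ, true_and]
    constructor
    · rintro ⟨i, hi⟩; rw [← hi]
    · intro h; exact ⟨p.1, Prod.ext rfl h⟩
  set Φ : Finset (Fin n × Fin n) → Finset (Fin n × Fin n) :=
    fun X => diagF ∪ X ∪ (Dlt \ X).image Prod.swap with hΦ
  have hΦ_mem : ∀ X (p : Fin n × Fin n),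
      p ∈ Φ X ↔ p.1 = p.2 ∨ p ∈ X ∨ ((p.2, p.1) ∈ Dlt ∧ (p.2, p.1) ∉ X) := by
    intro X p
    simp only [hΦ, Finset.mem_union, Finset.mem_image, Finset.mem_sdiff, hdiag_mem,
      or_assoc]
    constructor
    · rintro (h | h | ⟨q, ⟨hq1, hq2⟩, rfl⟩)
      · exact .inl h
      · exact .inr (.inl h)
      · exact .inr (.inr ⟨by simpa using hq1, by simpa using hq2⟩)
    · rintro (h | h | ⟨hq1, hq2⟩)
      · exact .inl h
      · exact .inr (.inl h)
      · exact .inr (.inr ⟨(p.2, p.1), ⟨hq1, hq2⟩, rfl⟩)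
  have hrec : ∀ X ⊆ Dlt, Φ X ∩ Dlt = X := by
    intro X hX
    ext p
    constructor
    · intro hp
      obtain ⟨hpΦ, hpD⟩ := Finset.mem_inter.mp hp
      rw [hΦ_mem] at hpΦ
      rw [hDlt_mem] at hpD
      rcases hpΦ with h | h | ⟨hD, -⟩
      · exact absurd h (ne_of_lt hpD.2)
      · exact h
      · rw [hDlt_mem] at hD
        exact absurd hD.2 (asymm hpD.2)
    · intro hp
      exact Finset.mem_inter.mpr ⟨(hΦ_mem _ _).mpr (.inr (.inl hp)), hX hp⟩
  have hset : {S : Finset (Fin n × Fin n) |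
        (∀ p ∈ S, (p : Fin n × Fin n).1 = p.2 ∨ T.Adj p.1 p.2) ∧
        (∀ i, (i, i) ∈ S) ∧
        ∀ i j : Fin n, T.Adj i j → ((i, j) ∈ S ↔ (j, i) ∉ S)} =
      ↑(Dlt.powerset.image Φ) := by
    ext S
    simp only [Finset.coe_image, Set.mem_image, Finset.mem_coe, Finset.mem_powerset,
      Set.mem_setOf_eq]
    constructor
    · rintro ⟨h1, h2, h3⟩
      refine ⟨S ∩ Dlt, Finset.inter_subset_right, ?_⟩
      ext p
      rw [hΦ_mem]
      constructor
      · rintro (h | h | ⟨hD, hns⟩)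
        · have := h2 p.1
          rwa [show (p.1, p.1) = p from Prod.ext rfl h] at this
        · exact (Finset.mem_inter.mp h).1
        · have hadj := ((hDlt_mem _).mp hD).1
          have hns' : (p.2, p.1) ∉ S := fun hs => hns (Finset.mem_inter.mpr ⟨hs, hD⟩)
          exact (h3 p.1 p.2 hadj.symm).mpr hns'
      · intro hp
        rcases h1 p hp with hd | hadj
        · exact .inl hd
        · rcases lt_trichotomy p.1 p.2 with hlt | heq | hgt
          · exact .inr (.inl (Finset.mem_inter.mpr ⟨hp, (hDlt_mem _).mpr ⟨hadj, hlt⟩⟩))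
          · exact .inl heq
          · refine .inr (.inr ⟨(hDlt_mem _).mpr ⟨hadj.symm, hgt⟩, ?_⟩)
            intro hmem
            exact ((h3 p.1 p.2 hadj).mp (show (p.1, p.2) ∈ S from hp))
              (Finset.mem_inter.mp hmem).1
    · rintro ⟨X, hX, rfl⟩
      refine ⟨?_, ?_, ?_⟩
      · intro p hp
        rw [hΦ_mem] at hp
        rcases hp with h | h | ⟨hD, -⟩
        · exact .inl h
        · exact .inr ((hDlt_mem p).mp (hX h)).1
        · rw [hDlt_mem] at hD
          exact .inr hD.1.symm
      · intro i
        rw [hΦ_mem]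
        exact .inl rfl
      · intro i j hadj
        rcases lt_trichotomy i j with hlt | heq | hgt
        · have hij : (i, j) ∈ Φ X ↔ (i, j) ∈ X := by
            rw [hΦ_mem]
            constructor
            · rintro (h | h | ⟨hD, -⟩)
              · exact absurd h (ne_of_lt hlt)
              · exact h
              · rw [hDlt_mem] at hD
                exact absurd hD.2 (asymm hlt)
            · exact fun h => .inr (.inl h)
          have hji : (j, i) ∈ Φ X ↔ (i, j) ∉ X := by
            rw [hΦ_mem]
            constructor
            · rintro (h | h | ⟨-, hns⟩)
              · exact absurd h.symm (ne_of_lt hlt)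
              · exact absurd ((hDlt_mem _).mp (hX h)).2 (asymm hlt)
              · exact hns
            · intro h
              exact .inr (.inr ⟨(hDlt_mem _).mpr ⟨hadj, hlt⟩, h⟩)
          rw [hij, hji, not_not]
        · exact absurd heq hadj.ne
        · have hij : (i, j) ∈ Φ X ↔ (j, i) ∉ X := by
            rw [hΦ_mem]
            constructor
            · rintro (h | h | ⟨-, hns⟩)
              · exact absurd h (ne_of_lt hgt).symm
              · exact absurd ((hDlt_mem _).mp (hX h)).2 (asymm hgt)
              · exact hns
            · intro h
              exact .inr (.inr ⟨(hDlt_mem _).mpr ⟨hadj.symm, hgt⟩, h⟩)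
          have hji : (j, i) ∈ Φ X ↔ (j, i) ∈ X := by
            rw [hΦ_mem]
            constructor
            · rintro (h | h | ⟨hD, -⟩)
              · exact absurd h (ne_of_lt hgt)
              · exact h
              · rw [hDlt_mem] at hD
                exact absurd hD.2 (asymm hgt)
            · exact fun h => .inr (.inl h)
          rw [hij, hji]
  rw [hset, Set.ncard_coe_finset]
  have hinj : Set.InjOn Φ ↑Dlt.powerset := by
    intro X hX Y hY hXY
    rw [Finset.mem_coe, Finset.mem_powerset] at hX hY
    rw [← hrec X hX, ← hrec Y hY, hXY]
  rw [Finset.card_image_of_injOn hinj, Finset.card_powerset]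
  have : Fintype ↥T.edgeSet := (Set.toFinite _).fintype
  have hcardE : T.edgeFinset.card + 1 = n := by
    have := hT.card_edgeFinset
    simpa using this
  have hDcard : Dlt.card = T.edgeFinset.card := by
    refine Finset.card_bij (fun p _ => s(p.1, p.2)) ?_ ?_ ?_
    · intro p hp
      rw [hDlt_mem] at hp
      rw [SimpleGraph.mem_edgeFinset, SimpleGraph.mem_edgeSet]
      exact hp.1
    · intro p hp q hq hpq
      rw [hDlt_mem] at hp hq
      rw [Sym2.eq_iff] at hpq
      rcases hpq with ⟨h1, h2⟩ | ⟨h1, h2⟩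
      · exact Prod.ext h1 h2
      · exact absurd (h1 ▸ h2 ▸ hq.2) (asymm hp.2)
    · intro e he
      rw [SimpleGraph.mem_edgeFinset] at he
      induction e with
      | _ a b =>
        rw [SimpleGraph.mem_edgeSet] at he
        rcases lt_trichotomy a b with hlt | heq | hgt
        · exact ⟨(a, b), (hDlt_mem _).mpr ⟨he, hlt⟩, rfl⟩
        · exact absurd heq he.ne
        · exact ⟨(b, a), (hDlt_mem _).mpr ⟨he.symm, hgt⟩, Sym2.eq_swap⟩
  rw [hDcard]
  congr 1
  omega
end

section
/- Let 0 < η < 1, let n ≥ 2, and let Ω be a set of n − 1 balls distributed among bins such that there exist at least ηn/2 pairwise-disjoint pairs of balls, each pair lying within a single bin. Let k be an integer with n^{2/3} ≤ k ≤ n − 1, and choose a k-element subset of Ω uniformly at random. Then the probability that no two chosen balls lie in the same bin is at most e^{−ηk²/(32n)} + e^{−ηk²/(8n)}. -/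
open Finset

lemma nat_sq_sub' (a : ℕ) : a * a - a = a * (a - 1) := by
  cases a with
  | zero => simp
  | succ j => rw [Nat.succ_sub_one, Nat.mul_succ, Nat.add_sub_cancel]

lemma nat_identity' (N k : ℕ) (h1 : 1 ≤ k) (hk : k ≤ N) :
    k * (k - 1) + 2 * (k * (N - k)) + (N - k) * (N - k - 1) = N * (N - 1) := by
  obtain ⟨j, rfl⟩ : ∃ j, k = j + 1 := ⟨k - 1, by omega⟩
  obtain ⟨d, rfl⟩ : ∃ d, N = (j + 1) + d := ⟨N - (j + 1), by omega⟩
  rcases d with _ | e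
  · simp
  · have e1 : (j + 1) + (e + 1) - (j + 1) = e + 1 := by omega
    have e2 : e + 1 - 1 = e := by omega
    have e3 : (j + 1) + (e + 1) - 1 = j + e + 1 := by omega
    have e4 : j + 1 - 1 = j := by omega
    rw [e1, e2, e3, e4]
    ring

open scoped Classical in
/-- Number of `k`-subsets avoiding the first `i` pairs. -/
noncomputable def avoidCount {Ω : Type*} [Fintype Ω] [DecidableEq Ω] {m : ℕ}
    (α β : Fin m → Ω) (k i : ℕ) : ℕ :=
  ((univ : Finset (Finset Ω)).filter
    (fun S => S.card = k ∧ ∀ t : Fin m, (t : ℕ) < i → ¬(α t ∈ S ∧ β t ∈ S))).card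

lemma avoidCount_zero {Ω : Type*} [Fintype Ω] [DecidableEq Ω] {m : ℕ}
    (α β : Fin m → Ω) (k : ℕ) :
    avoidCount α β k 0 = (Fintype.card Ω).choose k := by
  classical
  unfold avoidCount
  rw [filter_congr (q := fun S : Finset Ω => S.card = k) (fun S _ => by simp)]
  rw [← Finset.powerset_univ, ← Finset.powersetCard_eq_filter,
    Finset.card_powersetCard, card_univ]

/-- Injection lemma for sets containing `x` but not `y`. -/
lemma inj_one {Ω : Type*} [Fintype Ω] [DecidableEq Ω] (P : Finset Ω → Prop) [DecidablePred P]
    (hdown : ∀ (S : Finset Ω) (a : Ω), P S → P (S.erase a))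
    (x y : Ω) (hPy : ∀ S, P S → P (insert y S)) (k : ℕ) :
    (k - 1) * ((univ : Finset (Finset Ω)).filter
        (fun S => S.card = k ∧ P S ∧ x ∈ S ∧ y ∉ S)).card ≤
    (Fintype.card Ω - k) * ((univ : Finset (Finset Ω)).filter
        (fun S => S.card = k ∧ P S ∧ x ∈ S ∧ y ∈ S)).card := by
  classical
  set C1 := (univ : Finset (Finset Ω)).filter
      (fun S => S.card = k ∧ P S ∧ x ∈ S ∧ y ∉ S) with hC1
  set BB := (univ : Finset (Finset Ω)).filter
      (fun S => S.card = k ∧ P S ∧ x ∈ S ∧ y ∈ S) with hBB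
  have hL : (C1.sigma fun S => S.erase x).card = (k - 1) * C1.card := by
    rw [card_sigma]
    rw [Finset.sum_congr rfl (g := fun _ => k - 1) (fun S hS => ?_), Finset.sum_const,
      smul_eq_mul, mul_comm]
    simp only [hC1, mem_filter, mem_univ, true_and] at hS
    rw [card_erase_of_mem hS.2.2.1, hS.1]
  have hR : (BB.sigma fun T => univ \ T).card = (Fintype.card Ω - k) * BB.card := by
    rw [card_sigma]
    rw [Finset.sum_congr rfl (g := fun _ => Fintype.card Ω - k) (fun T hT => ?_),
      Finset.sum_const, smul_eq_mul, mul_comm]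
    simp only [hBB, mem_filter, mem_univ, true_and] at hT
    rw [card_sdiff_of_subset (subset_univ T), card_univ, hT.1]
  rw [← hL, ← hR]
  apply card_le_card_of_injOn (fun p => ⟨insert y (p.1.erase p.2), p.2⟩)
  · rintro ⟨S, a⟩ hp
    rw [mem_coe, mem_sigma] at hp ⊢
    obtain ⟨hS, ha⟩ := hp
    simp only [hC1, mem_filter, mem_univ, true_and] at hS
    obtain ⟨hcard, hP, hx, hy⟩ := hS
    have hax : a ≠ x := (mem_erase.mp ha).1
    have haS : a ∈ S := (mem_erase.mp ha).2
    have hyea : y ∉ S.erase a := fun h => hy (mem_of_mem_erase h)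
    have hk1 : 1 ≤ k := hcard ▸ card_pos.mpr ⟨a, haS⟩
    constructor
    · simp only [hBB, mem_filter, mem_univ, true_and]
      refine ⟨?_, hPy _ (hdown S a hP), ?_, mem_insert_self _ _⟩
      · rw [card_insert_of_notMem hyea, card_erase_of_mem haS, hcard]
        omega
      · exact mem_insert_of_mem (mem_erase.mpr ⟨hax.symm, hx⟩)
    · simp only [mem_sdiff, mem_univ, true_and, mem_insert, mem_erase]
      push_neg
      exact ⟨fun h => hy (h ▸ haS), fun h => absurd rfl h⟩
  · rintro ⟨S, a⟩ hS ⟨S', a'⟩ hS' heq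
    simp only [Finset.coe_sigma, Set.mem_sigma_iff, mem_coe] at hS hS'
    obtain ⟨hS1, hS2⟩ := hS
    obtain ⟨hS1', hS2'⟩ := hS'
    simp only [hC1, mem_filter, mem_univ, true_and] at hS1 hS1'
    simp only [Sigma.mk.inj_iff, heq_eq_eq] at heq
    obtain ⟨hT, rfl⟩ := heq
    have hy1 : y ∉ S.erase a := fun h => hS1.2.2.2 (mem_of_mem_erase h)
    have hy2 : y ∉ S'.erase a := fun h => hS1'.2.2.2 (mem_of_mem_erase h)
    have : S.erase a = S'.erase a := by
      have := congrArg (fun t => Finset.erase t y) hT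
      simpa [erase_insert hy1, erase_insert hy2] using this
    have haS : a ∈ S := (mem_erase.mp hS2).2
    have haS' : a ∈ S' := (mem_erase.mp hS2').2
    have : S = S' := by
      rw [← insert_erase haS, this, insert_erase haS']
    simp [this]

/-- Injection lemma for sets containing neither `x` nor `y`. -/
lemma inj_zero {Ω : Type*} [Fintype Ω] [DecidableEq Ω] (P : Finset Ω → Prop) [DecidablePred P]
    (hdown : ∀ (S : Finset Ω) (a : Ω), P S → P (S.erase a))
    (x y : Ω) (hxy : x ≠ y) (hPxy : ∀ S, P S → P (insert x (insert y S))) (k : ℕ) :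
    k * (k - 1) * ((univ : Finset (Finset Ω)).filter
        (fun S => S.card = k ∧ P S ∧ x ∉ S ∧ y ∉ S)).card ≤
    (Fintype.card Ω - k) * (Fintype.card Ω - k - 1) * ((univ : Finset (Finset Ω)).filter
        (fun S => S.card = k ∧ P S ∧ x ∈ S ∧ y ∈ S)).card := by
  classical
  set C0 := (univ : Finset (Finset Ω)).filter
      (fun S => S.card = k ∧ P S ∧ x ∉ S ∧ y ∉ S) with hC0
  set BB := (univ : Finset (Finset Ω)).filter
      (fun S => S.card = k ∧ P S ∧ x ∈ S ∧ y ∈ S) with hBB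
  have hL : (C0.sigma fun S => S.offDiag).card = k * (k - 1) * C0.card := by
    rw [card_sigma]
    rw [Finset.sum_congr rfl (g := fun _ => k * (k - 1)) (fun S hS => ?_), Finset.sum_const,
      smul_eq_mul, mul_comm]
    simp only [hC0, mem_filter, mem_univ, true_and] at hS
    rw [Finset.offDiag_card, hS.1, nat_sq_sub']
  have hR : (BB.sigma fun T => (univ \ T).offDiag).card
      = (Fintype.card Ω - k) * (Fintype.card Ω - k - 1) * BB.card := by
    rw [card_sigma]
    rw [Finset.sum_congr rfl (g := fun _ => (Fintype.card Ω - k) * (Fintype.card Ω - k - 1))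
      (fun T hT => ?_), Finset.sum_const, smul_eq_mul, mul_comm]
    simp only [hBB, mem_filter, mem_univ, true_and] at hT
    rw [Finset.offDiag_card, card_sdiff_of_subset (subset_univ T), card_univ, hT.1, nat_sq_sub']
  rw [← hL, ← hR]
  apply card_le_card_of_injOn
    (fun p => ⟨insert x (insert y ((p.1.erase p.2.1).erase p.2.2)), p.2⟩)
  · rintro ⟨S, a, b⟩ hp
    rw [mem_coe, mem_sigma] at hp ⊢
    obtain ⟨hS, hab⟩ := hp
    simp only [hC0, mem_filter, mem_univ, true_and] at hS
    obtain ⟨hcard, hP, hx, hy⟩ := hS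
    rw [Finset.mem_offDiag] at hab
    obtain ⟨haS, hbS, hne⟩ := hab
    set W := (S.erase a).erase b with hW
    have hbW : b ∈ S.erase a := mem_erase.mpr ⟨hne.symm, hbS⟩
    have hWsub : W ⊆ S := (erase_subset _ _).trans (erase_subset _ _)
    have hyW : y ∉ W := fun h => hy (hWsub h)
    have hxW : x ∉ insert y W := by
      simp only [mem_insert]
      push_neg
      exact ⟨hxy, fun h => hx (hWsub h)⟩
    have hk2 : 2 ≤ k := by
      rw [← hcard]
      exact Finset.one_lt_card.mpr ⟨a, haS, b, hbS, hne⟩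
    constructor
    · simp only [hBB, mem_filter, mem_univ, true_and]
      refine ⟨?_, hPxy _ (hdown _ b (hdown S a hP)), mem_insert_self _ _,
        mem_insert_of_mem (mem_insert_self _ _)⟩
      rw [card_insert_of_notMem hxW, card_insert_of_notMem hyW, hW,
        card_erase_of_mem hbW, card_erase_of_mem haS, hcard]
      omega
    · rw [Finset.mem_offDiag]
      have haW : a ∉ W := fun h => (notMem_erase a S) (mem_of_mem_erase h)
      have hbW' : b ∉ W := notMem_erase b _
      refine ⟨?_, ?_, hne⟩
      · simp only [mem_sdiff, mem_univ, true_and, mem_insert]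
        push_neg
        exact ⟨fun h => hx (h ▸ haS), fun h => hy (h ▸ haS), haW⟩
      · simp only [mem_sdiff, mem_univ, true_and, mem_insert]
        push_neg
        exact ⟨fun h => hx (h ▸ hbS), fun h => hy (h ▸ hbS), hbW'⟩
  · rintro ⟨S, a, b⟩ hS ⟨S', a', b'⟩ hS' heq
    simp only [Finset.coe_sigma, Set.mem_sigma_iff, mem_coe] at hS hS'
    obtain ⟨hS1, hS2⟩ := hS
    obtain ⟨hS1', hS2'⟩ := hS'
    simp only [hC0, mem_filter, mem_univ, true_and] at hS1 hS1'
    rw [Finset.mem_offDiag] at hS2 hS2'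
    simp only [Sigma.mk.inj_iff, heq_eq_eq, Prod.mk.injEq] at heq
    obtain ⟨hT, rfl, rfl⟩ := heq
    have key : ∀ (U : Finset Ω), U.card = k → P U → x ∉ U → y ∉ U → ∀ c d : Ω, c ∈ U → d ∈ U →
        ((insert x (insert y ((U.erase c).erase d))).erase x).erase y = (U.erase c).erase d := by
      intro U hUc hUP hUx hUy c d hc hd
      have hsub : (U.erase c).erase d ⊆ U := (erase_subset _ _).trans (erase_subset _ _)
      have h1 : x ∉ insert y ((U.erase c).erase d) := by
        simp only [mem_insert]
        push_neg
        exact ⟨hxy, fun h => hUx (hsub h)⟩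
      have h2 : y ∉ (U.erase c).erase d := fun h => hUy (hsub h)
      rw [erase_insert h1, erase_insert h2]
    have e1 := key S hS1.1 hS1.2.1 hS1.2.2.1 hS1.2.2.2 a b hS2.1 hS2.2.1
    have e2 := key S' hS1'.1 hS1'.2.1 hS1'.2.2.1 hS1'.2.2.2 a b hS2'.1 hS2'.2.1
    have hW : (S.erase a).erase b = (S'.erase a).erase b := by
      rw [← e1, ← e2, hT]
    have hbS : b ∈ S.erase a := mem_erase.mpr ⟨hS2.2.2.symm, hS2.2.1⟩
    have hbS' : b ∈ S'.erase a := mem_erase.mpr ⟨hS2'.2.2.symm, hS2'.2.1⟩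
    have : S = S' := by
      rw [← insert_erase hS2.1, ← insert_erase hbS, hW, insert_erase hbS',
        insert_erase hS2'.1]
    simp [this]

lemma four_split {Ω : Type*} [Fintype Ω] [DecidableEq Ω] (Q : Finset Ω → Prop)
    [DecidablePred Q] (x y : Ω) :
    ((univ : Finset (Finset Ω)).filter Q).card =
      (univ.filter (fun S : Finset Ω => Q S ∧ x ∈ S ∧ y ∈ S)).card +
      (univ.filter (fun S : Finset Ω => Q S ∧ x ∈ S ∧ y ∉ S)).card +
      (univ.filter (fun S : Finset Ω => Q S ∧ x ∉ S ∧ y ∈ S)).card +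
      (univ.filter (fun S : Finset Ω => Q S ∧ x ∉ S ∧ y ∉ S)).card := by
  classical
  have h1 := Finset.card_filter_add_card_filter_not
    (s := (univ : Finset (Finset Ω)).filter Q) (p := fun S => x ∈ S)
  have h2 := Finset.card_filter_add_card_filter_not
    (s := ((univ : Finset (Finset Ω)).filter Q).filter (fun S => x ∈ S))
    (p := fun S => y ∈ S)
  have h3 := Finset.card_filter_add_card_filter_not
    (s := ((univ : Finset (Finset Ω)).filter Q).filter (fun S => x ∉ S))
    (p := fun S => y ∈ S)
  simp only [filter_filter] at h1 h2 h3
  have e1 : ((univ : Finset (Finset Ω)).filter (fun S => (Q S ∧ x ∈ S) ∧ y ∈ S))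
      = univ.filter (fun S : Finset Ω => Q S ∧ x ∈ S ∧ y ∈ S) :=
    filter_congr (fun S _ => by tauto)
  have e2 : ((univ : Finset (Finset Ω)).filter (fun S => (Q S ∧ x ∈ S) ∧ ¬ y ∈ S))
      = univ.filter (fun S : Finset Ω => Q S ∧ x ∈ S ∧ y ∉ S) :=
    filter_congr (fun S _ => by tauto)
  have e3 : ((univ : Finset (Finset Ω)).filter (fun S => (Q S ∧ ¬ x ∈ S) ∧ y ∈ S))
      = univ.filter (fun S : Finset Ω => Q S ∧ x ∉ S ∧ y ∈ S) :=
    filter_congr (fun S _ => by tauto)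
  have e4 : ((univ : Finset (Finset Ω)).filter (fun S => (Q S ∧ ¬ x ∈ S) ∧ ¬ y ∈ S))
      = univ.filter (fun S : Finset Ω => Q S ∧ x ∉ S ∧ y ∉ S) :=
    filter_congr (fun S _ => by tauto)
  rw [e1] at h2
  rw [e3] at h3
  rw [e2] at h2
  rw [e4] at h3
  omega

lemma avoidCount_step {Ω : Type*} [Fintype Ω] [DecidableEq Ω] {m : ℕ}
    (α β : Fin m → Ω) (hα : Function.Injective α) (hβ : Function.Injective β)
    (hαβ : ∀ s t, α s ≠ β t) (k : ℕ) (hk1 : 1 ≤ k) (hk : k ≤ Fintype.card Ω) (hN2 : 2 ≤ Fintype.card Ω)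
    (i : ℕ) (hi : i < m) :
    (avoidCount α β k (i + 1) : ℝ) ≤
      (1 - ((k * (k - 1) : ℕ) : ℝ) / ((Fintype.card Ω * (Fintype.card Ω - 1) : ℕ) : ℝ)) *
        avoidCount α β k i := by
  classical
  set N := Fintype.card Ω with hN
  set P : Finset Ω → Prop := fun S => ∀ t : Fin m, (t : ℕ) < i → ¬(α t ∈ S ∧ β t ∈ S)
    with hP
  set x := α ⟨i, hi⟩ with hx
  set y := β ⟨i, hi⟩ with hy
  have hxy : x ≠ y := hαβ _ _
  have hdown : ∀ (S : Finset Ω) (a : Ω), P S → P (S.erase a) := by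
    intro S a h t ht hc
    exact h t ht ⟨mem_of_mem_erase hc.1, mem_of_mem_erase hc.2⟩
  have hPy : ∀ S, P S → P (insert y S) := by
    intro S h t ht hc
    rcases mem_insert.mp hc.1 with h1 | h1
    · exact hαβ t ⟨i, hi⟩ h1
    · rcases mem_insert.mp hc.2 with h2 | h2
      · have ht' : (t : ℕ) = i := by rw [hβ h2]
        omega
      · exact h t ht ⟨h1, h2⟩
  have hPx : ∀ S, P S → P (insert x S) := by
    intro S h t ht hc
    rcases mem_insert.mp hc.1 with h1 | h1
    · have ht' : (t : ℕ) = i := by rw [hα h1]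
      omega
    · rcases mem_insert.mp hc.2 with h2 | h2
      · exact hαβ ⟨i, hi⟩ t h2.symm
      · exact h t ht ⟨h1, h2⟩
  have hPxy : ∀ S, P S → P (insert x (insert y S)) := fun S h => hPx _ (hPy _ h)
  -- the four parts
  set BB := (univ : Finset (Finset Ω)).filter
      (fun S => S.card = k ∧ P S ∧ x ∈ S ∧ y ∈ S) with hBB
  set C1 := (univ : Finset (Finset Ω)).filter
      (fun S => S.card = k ∧ P S ∧ x ∈ S ∧ y ∉ S) with hC1
  set C2 := (univ : Finset (Finset Ω)).filter
      (fun S => S.card = k ∧ P S ∧ x ∉ S ∧ y ∈ S) with hC2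
  set C0 := (univ : Finset (Finset Ω)).filter
      (fun S => S.card = k ∧ P S ∧ x ∉ S ∧ y ∉ S) with hC0
  have hsplit : avoidCount α β k i = BB.card + C1.card + C2.card + C0.card := by
    unfold avoidCount
    have h4 := four_split (fun S : Finset Ω => S.card = k ∧ P S) x y
    rw [filter_congr (q := fun S : Finset Ω => S.card = k ∧ P S) (fun S _ => by rw [hP])]
    rw [h4, hBB, hC1, hC2, hC0]
    congr 1
    · congr 1
      · congr 1
        · exact congrArg card (filter_congr (fun S _ => by tauto))
        · exact congrArg card (filter_congr (fun S _ => by tauto))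
      · exact congrArg card (filter_congr (fun S _ => by tauto))
    · exact congrArg card (filter_congr (fun S _ => by tauto))
  have hsucc : avoidCount α β k (i + 1) = C1.card + C2.card + C0.card := by
    unfold avoidCount
    have h4 := four_split
      (fun S : Finset Ω => S.card = k ∧ ∀ t : Fin m, (t : ℕ) < i + 1 → ¬(α t ∈ S ∧ β t ∈ S))
      x y
    rw [h4]
    have hiff : ∀ (S : Finset Ω), (x ∉ S ∨ y ∉ S) →
        ((∀ t : Fin m, (t : ℕ) < i + 1 → ¬(α t ∈ S ∧ β t ∈ S)) ↔ P S) := by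
      intro S hS
      constructor
      · intro h t ht
        exact h t (by omega)
      · intro h t ht hc
        rcases Nat.lt_or_ge (t : ℕ) i with h' | h'
        · exact h t h' hc
        · have hti : (t : ℕ) = i := by omega
          have : t = ⟨i, hi⟩ := Fin.ext (by rw [hti])
          subst this
          rcases hS with hS | hS
          · exact hS hc.1
          · exact hS hc.2
    have hzero : ((univ : Finset (Finset Ω)).filter
        (fun S => (S.card = k ∧ ∀ t : Fin m, (t : ℕ) < i + 1 → ¬(α t ∈ S ∧ β t ∈ S))
          ∧ x ∈ S ∧ y ∈ S)).card = 0 := by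
      rw [Finset.card_eq_zero, Finset.filter_eq_empty_iff]
      rintro S - ⟨⟨-, h⟩, hxS, hyS⟩
      exact h ⟨i, hi⟩ (by simp) ⟨hxS, hyS⟩
    rw [hzero, hC1, hC2, hC0]
    have e1 := congrArg card (filter_congr (s := (univ : Finset (Finset Ω)))
      (p := fun S : Finset Ω => (S.card = k ∧ ∀ t : Fin m, (t : ℕ) < i + 1 →
        ¬(α t ∈ S ∧ β t ∈ S)) ∧ x ∈ S ∧ y ∉ S)
      (q := fun S : Finset Ω => S.card = k ∧ P S ∧ x ∈ S ∧ y ∉ S)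
      (fun S _ => by
        have := hiff S
        constructor
        · rintro ⟨⟨hc, hav⟩, hxS, hyS⟩
          exact ⟨hc, (this (Or.inr hyS)).mp hav, hxS, hyS⟩
        · rintro ⟨hc, hav, hxS, hyS⟩
          exact ⟨⟨hc, (this (Or.inr hyS)).mpr hav⟩, hxS, hyS⟩))
    have e2 := congrArg card (filter_congr (s := (univ : Finset (Finset Ω)))
      (p := fun S : Finset Ω => (S.card = k ∧ ∀ t : Fin m, (t : ℕ) < i + 1 →
        ¬(α t ∈ S ∧ β t ∈ S)) ∧ x ∉ S ∧ y ∈ S)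
      (q := fun S : Finset Ω => S.card = k ∧ P S ∧ x ∉ S ∧ y ∈ S)
      (fun S _ => by
        have := hiff S
        constructor
        · rintro ⟨⟨hc, hav⟩, hxS, hyS⟩
          exact ⟨hc, (this (Or.inl hxS)).mp hav, hxS, hyS⟩
        · rintro ⟨hc, hav, hxS, hyS⟩
          exact ⟨⟨hc, (this (Or.inl hxS)).mpr hav⟩, hxS, hyS⟩))
    have e0 := congrArg card (filter_congr (s := (univ : Finset (Finset Ω)))
      (p := fun S : Finset Ω => (S.card = k ∧ ∀ t : Fin m, (t : ℕ) < i + 1 →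
        ¬(α t ∈ S ∧ β t ∈ S)) ∧ x ∉ S ∧ y ∉ S)
      (q := fun S : Finset Ω => S.card = k ∧ P S ∧ x ∉ S ∧ y ∉ S)
      (fun S _ => by
        have := hiff S
        constructor
        · rintro ⟨⟨hc, hav⟩, hxS, hyS⟩
          exact ⟨hc, (this (Or.inl hxS)).mp hav, hxS, hyS⟩
        · rintro ⟨hc, hav, hxS, hyS⟩
          exact ⟨⟨hc, (this (Or.inl hxS)).mpr hav⟩, hxS, hyS⟩))
    rw [e1, e2, e0]
    omega
  -- injection bounds
  have b1 : (k - 1) * C1.card ≤ (N - k) * BB.card := inj_one P hdown x y hPy k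
  have b2 : (k - 1) * C2.card ≤ (N - k) * BB.card := by
    have h := inj_one P hdown y x hPx k
    have eC2 : ((univ : Finset (Finset Ω)).filter
        (fun S => S.card = k ∧ P S ∧ y ∈ S ∧ x ∉ S)) = C2 := by
      rw [hC2]; exact filter_congr (fun S _ => by tauto)
    have eBB : ((univ : Finset (Finset Ω)).filter
        (fun S => S.card = k ∧ P S ∧ y ∈ S ∧ x ∈ S)) = BB := by
      rw [hBB]; exact filter_congr (fun S _ => by tauto)
    rwa [eC2, eBB] at h
  have b0 : k * (k - 1) * C0.card ≤ (N - k) * (N - k - 1) * BB.card :=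
    inj_zero P hdown x y hxy hPxy k
  have keyNat : k * (k - 1) * avoidCount α β k i ≤ N * (N - 1) * BB.card := by
    rw [hsplit]
    calc k * (k-1) * (BB.card + C1.card + C2.card + C0.card)
        = k*(k-1)*BB.card + k*((k-1)*C1.card) + k*((k-1)*C2.card)
            + k*(k-1)*C0.card := by ring
      _ ≤ k*(k-1)*BB.card + k*((N-k)*BB.card) + k*((N-k)*BB.card)
            + (N-k)*(N-k-1)*BB.card :=
          add_le_add (add_le_add (add_le_add le_rfl (Nat.mul_le_mul_left _ b1))
            (Nat.mul_le_mul_left _ b2)) b0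
      _ = (k*(k-1) + 2*(k*(N-k)) + (N-k)*(N-k-1)) * BB.card := by ring
      _ = N*(N-1)*BB.card := by rw [nat_identity' N k hk1 hk]
  have hAsum : avoidCount α β k i = avoidCount α β k (i+1) + BB.card := by
    rw [hsplit, hsucc]; omega
  have hNpos : (0:ℝ) < ((N * (N-1) : ℕ) : ℝ) := by
    have : 0 < N * (N-1) := Nat.mul_pos (by omega) (by omega)
    exact_mod_cast this
  have hfrac : ((k*(k-1) : ℕ) : ℝ) / ((N*(N-1) : ℕ) : ℝ) * (avoidCount α β k i : ℝ)
      ≤ (BB.card : ℝ) := by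
    rw [div_mul_eq_mul_div, div_le_iff₀ hNpos]
    have : ((k*(k-1) : ℕ) : ℝ) * (avoidCount α β k i : ℝ)
        ≤ ((N*(N-1) : ℕ) : ℝ) * (BB.card : ℝ) := by exact_mod_cast keyNat
    linarith
  have hcast : (avoidCount α β k (i+1) : ℝ)
      = (avoidCount α β k i : ℝ) - BB.card := by
    rw [hAsum]; push_cast; ring
  rw [hcast]
  have expand : (1 - ((k*(k-1) : ℕ) : ℝ) / ((N*(N-1) : ℕ) : ℝ)) * (avoidCount α β k i : ℝ)
      = (avoidCount α β k i : ℝ)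
        - ((k*(k-1) : ℕ) : ℝ) / ((N*(N-1) : ℕ) : ℝ) * (avoidCount α β k i : ℝ) := by ring
  rw [expand]
  linarith

/-- balls in bins.  `Ω` is a set of `n − 1` balls assigned to bins by `bin`,
containing at least `ηn/2` pairwise-disjoint pairs `(α t, β t)` of balls lying in a common
bin.  If `n^{2/3} ≤ k ≤ n − 1` and a `k`-element subset of `Ω` is chosen uniformly at
random, the probability that no two chosen balls lie in the same bin is at most
`e^{−ηk²/(32n)} + e^{−ηk²/(8n)}` (stated here by bounding the number of such subsets). -/
theorem statement_12 {Ω B : Type*} [Fintype Ω] [DecidableEq Ω]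
    (n : ℕ) (hn : 2 ≤ n) (hΩ : Fintype.card Ω = n - 1) (bin : Ω → B)
    (η : ℝ) (hη0 : 0 < η) (hη1 : η < 1)
    (m : ℕ) (hm : η * n / 2 ≤ m) (α β : Fin m → Ω)
    (hpair : ∀ t, bin (α t) = bin (β t))
    (hα : Function.Injective α) (hβ : Function.Injective β)
    (hαβ : ∀ s t, α s ≠ β t)
    (k : ℕ) (hk1 : (n : ℝ) ^ ((2 : ℝ) / 3) ≤ k) (hk2 : k ≤ n - 1) :
    ({S : Finset Ω | S.card = k ∧ Set.InjOn bin ↑S}.ncard : ℝ) ≤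
      (Real.exp (-(η * k ^ 2) / (32 * n)) + Real.exp (-(η * k ^ 2) / (8 * n))) *
        (n - 1).choose k := by
  classical
  have hn1 : (1 : ℝ) < (n : ℝ) := by exact_mod_cast (by omega : 1 < n)
  have hrpow : (1 : ℝ) < (n : ℝ) ^ ((2 : ℝ) / 3) :=
    (Real.one_lt_rpow_iff_of_pos (by linarith)).mpr (Or.inl ⟨hn1, by norm_num⟩)
  have hk2' : 2 ≤ k := by
    have h1 : (1 : ℝ) < (k : ℝ) := lt_of_lt_of_le hrpow hk1
    have : 1 < k := by exact_mod_cast h1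
    omega
  have hn3 : 3 ≤ n := by omega
  set N := n - 1 with hNdef
  have hNk : k ≤ N := hk2
  have hN2 : 2 ≤ N := le_trans hk2' hNk
  set p : ℝ := ((k * (k - 1) : ℕ) : ℝ) /
      ((Fintype.card Ω * (Fintype.card Ω - 1) : ℕ) : ℝ) with hp
  have hNpos : (0 : ℝ) < ((Fintype.card Ω * (Fintype.card Ω - 1) : ℕ) : ℝ) := by
    have : 0 < Fintype.card Ω * (Fintype.card Ω - 1) := by
      rw [hΩ]; exact Nat.mul_pos (by omega) (by omega)
    exact_mod_cast this
  have hp0 : 0 ≤ p := by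
    rw [hp]
    apply div_nonneg _ (le_of_lt hNpos)
    exact Nat.cast_nonneg _
  have hp1 : p ≤ 1 := by
    rw [hp, div_le_one hNpos]
    have : k * (k - 1) ≤ Fintype.card Ω * (Fintype.card Ω - 1) := by
      rw [hΩ]
      exact Nat.mul_le_mul hNk (by omega)
    exact_mod_cast this
  -- main induction
  have hmain : ∀ i, i ≤ m →
      (avoidCount α β k i : ℝ) ≤ (1 - p) ^ i * ((N.choose k : ℕ) : ℝ) := by
    intro i
    induction i with
    | zero =>
      intro _
      rw [avoidCount_zero α β k, hΩ]
      simp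
    | succ j ih =>
      intro hj
      have h1 : (avoidCount α β k (j + 1) : ℝ) ≤ (1 - p) * avoidCount α β k j := by
        rw [hp]
        exact avoidCount_step α β hα hβ hαβ k (by omega) (by omega)
          (by omega) j (by omega)
      have h2 := ih (by omega)
      calc (avoidCount α β k (j + 1) : ℝ) ≤ (1 - p) * avoidCount α β k j := h1
        _ ≤ (1 - p) * ((1 - p) ^ j * ((N.choose k : ℕ) : ℝ)) :=
            mul_le_mul_of_nonneg_left h2 (by linarith)
        _ = (1 - p) ^ (j + 1) * ((N.choose k : ℕ) : ℝ) := by ring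
  -- the set we bound is inside the avoiding sets
  have hsubset : ({S : Finset Ω | S.card = k ∧ Set.InjOn bin ↑S}.ncard : ℝ)
      ≤ (avoidCount α β k m : ℝ) := by
    have h1 : {S : Finset Ω | S.card = k ∧ Set.InjOn bin ↑S}.ncard
        ≤ avoidCount α β k m := by
      unfold avoidCount
      rw [← Set.ncard_coe_finset]
      apply Set.ncard_le_ncard _ (Finset.finite_toSet _)
      intro S hS
      simp only [Set.mem_setOf_eq] at hS
      rw [Finset.mem_coe, mem_filter]
      refine ⟨mem_univ _, hS.1, ?_⟩
      intro t ht hc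
      exact hαβ t t (hS.2 (Finset.mem_coe.mpr hc.1) (Finset.mem_coe.mpr hc.2) (hpair t))
    exact_mod_cast h1
  -- analytic estimates
  have hkR : (2 : ℝ) ≤ (k : ℝ) := by exact_mod_cast hk2'
  have hnR : (3 : ℝ) ≤ (n : ℝ) := by exact_mod_cast hn3
  have hp_expr : p = ((k : ℝ) * ((k : ℝ) - 1)) / (((n : ℝ) - 1) * ((n : ℝ) - 2)) := by
    rw [hp, hΩ]
    have e1 : ((n - 1 : ℕ) : ℝ) = (n : ℝ) - 1 := by
      rw [Nat.cast_sub (by omega : 1 ≤ n)]; norm_num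
    have e2 : ((n - 1 - 1 : ℕ) : ℝ) = (n : ℝ) - 2 := by
      rw [show n - 1 - 1 = n - 2 from rfl, Nat.cast_sub (by omega : 2 ≤ n)]; norm_num
    have e3 : ((k - 1 : ℕ) : ℝ) = (k : ℝ) - 1 := by
      rw [Nat.cast_sub (by omega : 1 ≤ k)]; norm_num
    rw [Nat.cast_mul, Nat.cast_mul, e1, e2, e3]
  have h1p : 0 ≤ 1 - p := by linarith
  have hexp1 : (1 - p) ^ m ≤ Real.exp (-(p * m)) := by
    calc (1 - p) ^ m ≤ (Real.exp (-p)) ^ m := by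
          apply pow_le_pow_left₀ h1p
          linarith [Real.add_one_le_exp (-p)]
      _ = Real.exp (-(p * m)) := by
          rw [← Real.exp_nat_mul]
          congr 1
          ring
  have hpm : η * (k : ℝ) ^ 2 / (32 * n) ≤ p * m := by
    have step1 : η * (k : ℝ) ^ 2 / (32 * n) ≤ p * (η * n / 2) := by
      rw [hp_expr, div_mul_eq_mul_div, div_le_div_iff₀ (by linarith) (by nlinarith)]
      have h1 : ((n : ℝ) - 1) * ((n : ℝ) - 2) ≤ (n : ℝ) * n := by nlinarith
      have h2 : (k : ℝ) ≤ 16 * ((k : ℝ) - 1) := by linarith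
      nlinarith [mul_le_mul_of_nonneg_left h1
          (show (0 : ℝ) ≤ η * (k : ℝ) ^ 2 by positivity),
        mul_le_mul_of_nonneg_left h2
          (show (0 : ℝ) ≤ 2 * η * (k : ℝ) * (n : ℝ) * (n : ℝ) by positivity)]
    calc η * (k : ℝ) ^ 2 / (32 * n) ≤ p * (η * n / 2) := step1
      _ ≤ p * m := mul_le_mul_of_nonneg_left hm hp0
  have hexp2 : Real.exp (-(p * m)) ≤ Real.exp (-(η * (k : ℝ) ^ 2) / (32 * n)) := by
    apply Real.exp_le_exp.mpr
    rw [neg_div]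
    linarith
  have hchoose0 : (0 : ℝ) ≤ ((N.choose k : ℕ) : ℝ) := Nat.cast_nonneg _
  calc ({S : Finset Ω | S.card = k ∧ Set.InjOn bin ↑S}.ncard : ℝ)
      ≤ (avoidCount α β k m : ℝ) := hsubset
    _ ≤ (1 - p) ^ m * ((N.choose k : ℕ) : ℝ) := hmain m le_rfl
    _ ≤ Real.exp (-(η * (k : ℝ) ^ 2) / (32 * n)) * ((N.choose k : ℕ) : ℝ) :=
        mul_le_mul_of_nonneg_right (hexp1.trans hexp2) hchoose0
    _ ≤ (Real.exp (-(η * (k : ℝ) ^ 2) / (32 * n))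
          + Real.exp (-(η * (k : ℝ) ^ 2) / (8 * n))) * ((N.choose k : ℕ) : ℝ) := by
        apply mul_le_mul_of_nonneg_right _ hchoose0
        linarith [Real.exp_pos (-(η * (k : ℝ) ^ 2) / (8 * n))]
end
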